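/- arXiv:2506.16460 — 2 statements merged into one kernel-verified Lean document; each statement's English description precedes it below -/
import Mathlib

section
/- Strong adversary, single coordinate, IN case: if the challenge batch mean μ_B is the average of k of the actual training samples of a fixed target task τ, then E[(μ̂ − μ̄)·(μ_B − μ̄)] = σ̄²/T + σ²/(N·T). -/
/-!
Both `μ̂` and `μ_B` are linear combinations `∑ₛ aₛ Fₛ`, `∑ₛ bₛ Fₛ` of the independent Gaussian
coordinates `F = (μᵢ)ᵢ ⊔ (εᵢⱼ)ᵢⱼ`, and each has mean `μ̄`, so the expectation in question is their
covariance. By bilinearity and independence it collapses to the diagonal `∑ₛ aₛ bₛ Var Fₛ`: the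
shared task mean `μ_τ` contributes `(1/T) σ̄²`, and each of the `k` noises `ε_{τ,j}` of the batch
contributes `(1/(NT)) (1/k) σ²`.
-/

open MeasureTheory ProbabilityTheory Finset
open scoped NNReal

namespace ProbabilityTheory

variable {Ω : Type*} {mΩ : MeasurableSpace Ω} {P : Measure Ω}

lemma hasLaw_of_map_eq {𝓧 : Type*} {m𝓧 : MeasurableSpace 𝓧} {ν : Measure 𝓧} [NeZero ν]
    {X : Ω → 𝓧} (h : P.map X = ν) : HasLaw X ν P :=
  ⟨.of_map_ne_zero (h ▸ NeZero.ne ν), h⟩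

lemma HasLaw.memLp_gaussianReal {X : Ω → ℝ} {m : ℝ} {v : ℝ≥0}
    (hX : HasLaw X (gaussianReal m v) P) (p : ℝ≥0) : MemLp X p P :=
  (memLp_map_measure_iff aestronglyMeasurable_id hX.aemeasurable).1
    (hX.map_eq ▸ memLp_id_gaussianReal p)

lemma HasLaw.integral_eq_of_gaussianReal {X : Ω → ℝ} {m : ℝ} {v : ℝ≥0}
    (hX : HasLaw X (gaussianReal m v) P) : P[X] = m := by
  rw [hX.integral_eq, integral_id_gaussianReal]

lemma HasLaw.variance_eq_of_gaussianReal {X : Ω → ℝ} {m : ℝ} {v : ℝ≥0}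
    (hX : HasLaw X (gaussianReal m v) P) : Var[X; P] = v := by
  rw [hX.variance_eq, variance_id_gaussianReal]

lemma integral_fun_sum_mul {ι : Type*} [Fintype ι] {X : ι → Ω → ℝ}
    (hX : ∀ i, Integrable (X i) P) (a : ι → ℝ) :
    ∫ ω, ∑ i, a i * X i ω ∂P = ∑ i, a i * P[X i] := by
  rw [integral_finsetSum _ fun i _ ↦ (hX i).const_mul (a i)]
  simp_rw [integral_const_mul]

lemma iIndepFun.covariance_sum_mul_sum [IsFiniteMeasure P] {ι : Type*} [Fintype ι]
    {X : ι → Ω → ℝ} (hX : iIndepFun X P) (hL2 : ∀ i, MemLp (X i) 2 P) (a b : ι → ℝ) :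
    cov[fun ω ↦ ∑ i, a i * X i ω, fun ω ↦ ∑ i, b i * X i ω; P]
      = ∑ i, a i * b i * Var[X i; P] := by
  classical
  rw [covariance_fun_sum_fun_sum (fun i ↦ (hL2 i).const_mul (a i))
    (fun i ↦ (hL2 i).const_mul (b i))]
  refine sum_congr rfl fun i _ ↦ ?_
  rw [sum_eq_single i]
  · rw [covariance_const_mul_left, covariance_const_mul_right,
      covariance_self (hL2 i).aemeasurable]
    ring
  · intro j _ hji
    rw [covariance_const_mul_left, covariance_const_mul_right,
      (hX.indepFun hji.symm).covariance_eq_zero (hL2 i) (hL2 j), mul_zero, mul_zero]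
  · simp

lemma iIndepFun.integral_sum_sub_mul_sum_sub_of_gaussianReal [IsProbabilityMeasure P]
    {ι : Type*} [Fintype ι] {X : ι → Ω → ℝ} {m : ι → ℝ} {v : ι → ℝ≥0} (hX : iIndepFun X P)
    (hlaw : ∀ i, HasLaw (X i) (gaussianReal (m i) (v i)) P) (a b : ι → ℝ) :
    ∫ ω, (∑ i, a i * X i ω - ∑ i, a i * m i) * (∑ i, b i * X i ω - ∑ i, b i * m i) ∂P
      = ∑ i, a i * b i * v i := by
  have hL2 i : MemLp (X i) 2 P := (hlaw i).memLp_gaussianReal 2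
  have hmean (c : ι → ℝ) : ∫ ω, ∑ i, c i * X i ω ∂P = ∑ i, c i * m i := by
    rw [integral_fun_sum_mul fun i ↦ (hL2 i).integrable one_le_two]
    simp_rw [(hlaw _).integral_eq_of_gaussianReal]
  rw [← hmean a, ← hmean b, ← covariance, hX.covariance_sum_mul_sum hL2]
  simp_rw [(hlaw _).variance_eq_of_gaussianReal]

end ProbabilityTheory

section Weights

variable {T N k : ℕ}

-- `μ̂` and `μ_B` as combinations of the coordinates `Sum.inl i ↦ μᵢ`, `Sum.inr (i, j) ↦ εᵢⱼ`.
noncomputable def multitaskWeight (T N : ℕ) : Fin T ⊕ Fin T × Fin N → ℝ :=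
  Sum.elim (fun _ ↦ (T : ℝ)⁻¹) (fun _ ↦ ((N : ℝ) * T)⁻¹)

noncomputable def batchWeight (hkN : k ≤ N) (τ : Fin T) : Fin T ⊕ Fin T × Fin N → ℝ :=
  Sum.elim (Pi.single τ 1)
    (fun p ↦ if p.1 = τ ∧ p.2 ∈ univ.map (Fin.castLEEmb hkN) then (k : ℝ)⁻¹ else 0)

lemma multitask_mean_eq_sum_multitaskWeight (hN : N ≠ 0) (x : Fin T ⊕ Fin T × Fin N → ℝ) :
    (1 / (T : ℝ)) * ∑ i, (1 / (N : ℝ)) * ∑ j, (x (.inl i) + x (.inr (i, j)))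
      = ∑ s, multitaskWeight T N s * x s := by
  rw [Fintype.sum_sum_type, Fintype.sum_prod_type, ← sum_add_distrib, mul_sum]
  refine sum_congr rfl fun i _ ↦ ?_
  simp only [multitaskWeight, Sum.elim_inl, Sum.elim_inr, sum_add_distrib, sum_const, card_univ,
    Fintype.card_fin, nsmul_eq_mul, ← mul_sum]
  field_simp

lemma batch_mean_eq_sum_batchWeight (hk : k ≠ 0) (hkN : k ≤ N) (τ : Fin T)
    (x : Fin T ⊕ Fin T × Fin N → ℝ) :
    (1 / (k : ℝ)) * ∑ j : Fin k, (x (.inl τ) + x (.inr (τ, Fin.castLE hkN j)))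
      = ∑ s, batchWeight hkN τ s * x s := by
  rw [Fintype.sum_sum_type, Fintype.sum_prod_type]
  simp only [batchWeight, Sum.elim_inl, Sum.elim_inr, ite_and, ite_mul, zero_mul,
    Pi.single_apply, sum_ite_irrel, sum_const_zero, sum_ite_eq', mem_univ, if_true, one_mul]
  rw [sum_ite_mem, univ_inter, sum_map]
  simp only [Fin.coe_castLEEmb, sum_add_distrib, sum_const, card_univ, Fintype.card_fin,
    nsmul_eq_mul, mul_add, ← mul_sum]
  field_simp

lemma sum_multitaskWeight_mul_batchWeight (hk : k ≠ 0) (hkN : k ≤ N) (τ : Fin T) (v w : ℝ) :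
    ∑ s, multitaskWeight T N s * batchWeight hkN τ s * Sum.elim (fun _ ↦ v) (fun _ ↦ w) s
      = v / T + w / (N * T) := by
  rw [Fintype.sum_sum_type, Fintype.sum_prod_type]
  simp only [multitaskWeight, batchWeight, Sum.elim_inl, Sum.elim_inr, ite_and, mul_ite,
    ite_mul, mul_zero, zero_mul, Pi.single_apply, sum_ite_irrel, sum_const_zero, sum_ite_eq',
    mem_univ, if_true]
  rw [sum_ite_mem, univ_inter, sum_const, card_map, card_univ, Fintype.card_fin, nsmul_eq_mul]
  field_simp

end Weights

theorem strong_adversary_in_single_coordinate_general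
    {Ω : Type*} [MeasureSpace Ω] [IsProbabilityMeasure (ℙ : Measure Ω)]
    (T N k : ℕ) (hk : 0 < k) (hkN : k ≤ N)
    (μbar σbar σ : ℝ)
    (μ : Fin T → Ω → ℝ) (ε : Fin T → Fin N → Ω → ℝ)
    (hμlaw : ∀ i, Measure.map (μ i) ℙ = gaussianReal μbar (σbar ^ 2).toNNReal)
    (hεlaw : ∀ i j, Measure.map (ε i j) ℙ = gaussianReal 0 (σ ^ 2).toNNReal)
    (hindep : iIndepFun
      (Sum.elim μ (fun p : Fin T × Fin N => ε p.1 p.2)) ℙ)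
    (τ : Fin T) :
    ∫ ω,
      ((1 / (T : ℝ)) * ∑ i : Fin T, (1 / (N : ℝ)) * ∑ j : Fin N, (μ i ω + ε i j ω) - μbar)
        * ((1 / (k : ℝ)) * ∑ j : Fin k, (μ τ ω + ε τ (Fin.castLE hkN j) ω) - μbar) ∂ℙ
      = σbar ^ 2 / T + σ ^ 2 / (N * T) := by
  have hT : (T : ℝ) ≠ 0 := Nat.cast_ne_zero.2 τ.pos.ne'
  have hN : N ≠ 0 := by omega
  replace hk : k ≠ 0 := hk.ne'
  set F := Sum.elim μ (fun p : Fin T × Fin N ↦ ε p.1 p.2)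
  set m : Fin T ⊕ Fin T × Fin N → ℝ := Sum.elim (fun _ ↦ μbar) (fun _ ↦ 0)
  set V : Fin T ⊕ Fin T × Fin N → ℝ := Sum.elim (fun _ ↦ σbar ^ 2) (fun _ ↦ σ ^ 2)
  have hV s : 0 ≤ V s := by rcases s <;> exact sq_nonneg _
  have hlaw : ∀ s, HasLaw (F s) (gaussianReal (m s) (V s).toNNReal) ℙ := by
    rintro (i | ⟨i, j⟩)
    exacts [hasLaw_of_map_eq (hμlaw i), hasLaw_of_map_eq (hεlaw i j)]
  have hEA : ∑ s, multitaskWeight T N s * m s = μbar := by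
    rw [← multitask_mean_eq_sum_multitaskWeight hN]
    simp [m, hT, hN]
  have hEB : ∑ s, batchWeight hkN τ s * m s = μbar := by
    rw [← batch_mean_eq_sum_batchWeight hk hkN τ]
    simp [m, hk]
  calc _ = ∫ ω, (∑ s, multitaskWeight T N s * F s ω - ∑ s, multitaskWeight T N s * m s)
          * (∑ s, batchWeight hkN τ s * F s ω - ∑ s, batchWeight hkN τ s * m s) ∂ℙ := by
        rw [hEA, hEB]
        refine integral_congr_ae (.of_forall fun ω ↦ ?_)
        beta_reduce
        rw [← multitask_mean_eq_sum_multitaskWeight hN (F · ω),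
          ← batch_mean_eq_sum_batchWeight hk hkN τ (F · ω)]
        rfl
    _ = ∑ s, multitaskWeight T N s * batchWeight hkN τ s * V s := by
        rw [hindep.integral_sum_sub_mul_sum_sub_of_gaussianReal hlaw]
        simp_rw [Real.coe_toNNReal _ (hV _)]
    _ = _ := sum_multitaskWeight_mul_batchWeight hk hkN τ _ _

/-- Strong adversary, single coordinate, IN case: if the challenge batch mean `μ_B` is the
average of `k` actual training samples of a fixed target task `τ`, then
`E[(μ̂ − μ̄)·(μ_B − μ̄)] = σ̄²/T + σ²/(N·T)`. -/
theorem strong_adversary_in_single_coordinate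
    {Ω : Type*} [MeasureSpace Ω] [IsProbabilityMeasure (ℙ : Measure Ω)]
    (T N k : ℕ) (hT : 0 < T) (hN : 0 < N) (hk : 0 < k) (hkN : k ≤ N)
    (μbar σbar σ : ℝ) (hσbar : 0 < σbar) (hσ : 0 < σ)
    (μ : Fin T → Ω → ℝ) (ε : Fin T → Fin N → Ω → ℝ)
    (hμmeas : ∀ i, Measurable (μ i))
    (hεmeas : ∀ i j, Measurable (ε i j))
    (hμlaw : ∀ i, Measure.map (μ i) ℙ = gaussianReal μbar (σbar ^ 2).toNNReal)
    (hεlaw : ∀ i j, Measure.map (ε i j) ℙ = gaussianReal 0 (σ ^ 2).toNNReal)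
    (hindep : iIndepFun
      (Sum.elim μ (fun p : Fin T × Fin N => ε p.1 p.2)) ℙ)
    (τ : Fin T) :
    ∫ ω,
      ((1 / (T : ℝ)) * ∑ i : Fin T, (1 / (N : ℝ)) * ∑ j : Fin N, (μ i ω + ε i j ω) - μbar)
        * ((1 / (k : ℝ)) * ∑ j : Fin k, (μ τ ω + ε τ (Fin.castLE hkN j) ω) - μbar) ∂ℙ
      = σbar ^ 2 / T + σ ^ 2 / (N * T) :=
  strong_adversary_in_single_coordinate_general T N k hk hkN μbar σbar σ μ ε hμlaw hεlaw hindep τ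
end

section
/- Weak adversary IN case (Theorem 2 of the paper): the tracing statistic z_IN := Σ_{c ∈ Fin d} (μ̂_c − μ̄)·(μ_{B,c} − μ̄), computed from a challenge batch of k fresh samples drawn from the distribution of a fixed training task τ (samples never used to compute μ̂), satisfies E[z_IN] = (d/T)·σ̄². -/
open MeasureTheory ProbabilityTheory

/-!
Both estimators are unbiased for `μ̄`, so each coordinate contributes `cov(μ̂_c, μ_{B,c})`.
Expanding the two sample means bilinearly, all cross covariances between distinct independent
variables vanish; what survives is the average over `i` of `cov(μ_{c,i}, μ_{c,τ})`, which is
`σ̄²` for `i = τ` and `0` otherwise. Hence each coordinate contributes `σ̄² / T`.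
-/

namespace WeakAdversary

variable {Ω : Type*} [MeasurableSpace Ω] {P : Measure Ω}

lemma hasLaw_of_map_eq {𝓧 : Type*} [MeasurableSpace 𝓧] {X : Ω → 𝓧} {μ : Measure 𝓧} [NeZero μ]
    (h : P.map X = μ) : HasLaw X μ P :=
  ⟨.of_map_ne_zero (h ▸ NeZero.ne μ), h⟩

lemma memLp_two_of_map_eq_gaussianReal {X : Ω → ℝ} {m : ℝ} {v : NNReal}
    (h : P.map X = gaussianReal m v) : MemLp X 2 P :=
  (hasLaw_of_map_eq h).hasGaussianLaw.memLp_two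

lemma integral_of_map_eq_gaussianReal {X : Ω → ℝ} {m : ℝ} {v : NNReal}
    (h : P.map X = gaussianReal m v) : P[X] = m := by
  rw [(hasLaw_of_map_eq h).integral_eq, integral_id_gaussianReal]

lemma variance_of_map_eq_gaussianReal {X : Ω → ℝ} {m : ℝ} {v : NNReal}
    (h : P.map X = gaussianReal m v) : Var[X; P] = v := by
  rw [(hasLaw_of_map_eq h).variance_eq, variance_id_gaussianReal]

noncomputable def sampleMean {n : ℕ} (X : Fin n → Ω → ℝ) : Ω → ℝ :=
  fun ω ↦ (1 / n : ℝ) * ∑ i, X i ω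

lemma memLp_sampleMean {n : ℕ} {X : Fin n → Ω → ℝ} {p : ENNReal} (hX : ∀ i, MemLp (X i) p P) :
    MemLp (sampleMean X) p P :=
  (memLp_finsetSum _ fun i _ ↦ hX i).const_mul _

lemma integral_sampleMean {n : ℕ} (hn : n ≠ 0) {X : Fin n → Ω → ℝ} {m : ℝ}
    (hX : ∀ i, Integrable (X i) P) (hm : ∀ i, P[X i] = m) : P[sampleMean X] = m := by
  simp only [sampleMean]
  rw [integral_const_mul, integral_finsetSum _ fun i _ ↦ hX i]
  simp [hm, hn]

lemma integral_sub_mul_sub_eq_covariance {X Y : Ω → ℝ} {a b : ℝ} (ha : P[X] = a) (hb : P[Y] = b) :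
    ∫ ω, (X ω - a) * (Y ω - b) ∂P = cov[X, Y; P] := by
  rw [covariance, ha, hb]

variable [IsProbabilityMeasure P]

lemma covariance_sampleMean_left {n : ℕ} {X : Fin n → Ω → ℝ} {Y : Ω → ℝ}
    (hX : ∀ i, MemLp (X i) 2 P) (hY : MemLp Y 2 P) :
    cov[sampleMean X, Y; P] = (1 / n : ℝ) * ∑ i, cov[X i, Y; P] := by
  unfold sampleMean
  rw [covariance_const_mul_left, covariance_fun_sum_left hX hY]

lemma covariance_sampleMean_right {n : ℕ} {X : Ω → ℝ} {Y : Fin n → Ω → ℝ}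
    (hX : MemLp X 2 P) (hY : ∀ i, MemLp (Y i) 2 P) :
    cov[X, sampleMean Y; P] = (1 / n : ℝ) * ∑ i, cov[X, Y i; P] := by
  rw [covariance_comm, covariance_sampleMean_left hY hX]
  simp_rw [covariance_comm]

lemma covariance_add_add_of_uncorrelated {X₁ Y₁ X₂ Y₂ : Ω → ℝ}
    (hX₁ : MemLp X₁ 2 P) (hY₁ : MemLp Y₁ 2 P) (hX₂ : MemLp X₂ 2 P) (hY₂ : MemLp Y₂ 2 P)
    (h₁₂ : cov[X₁, Y₂; P] = 0) (h₂₁ : cov[Y₁, X₂; P] = 0) (h₂₂ : cov[Y₁, Y₂; P] = 0) :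
    cov[X₁ + Y₁, X₂ + Y₂; P] = cov[X₁, X₂; P] := by
  rw [covariance_add_left hX₁ hY₁ (hX₂.add hY₂), covariance_add_right hX₁ hX₂ hY₂,
    covariance_add_right hY₁ hX₂ hY₂, h₁₂, h₂₁, h₂₂]
  ring

section TwoLevelMean

variable {T N k : ℕ} {M : Fin T → Ω → ℝ} {E : Fin T → Fin N → Ω → ℝ} {E' : Fin k → Ω → ℝ}
  (τ : Fin T) (hM : ∀ i, MemLp (M i) 2 P) (hE : ∀ i j, MemLp (E i j) 2 P)
  (hE' : ∀ l, MemLp (E' l) 2 P)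

include hM hE hE' in
lemma covariance_taskMean_batchMean (hN : N ≠ 0) (hk : k ≠ 0)
    (hMM : ∀ i ≠ τ, cov[M i, M τ; P] = 0) (hME' : ∀ i l, cov[M i, E' l; P] = 0)
    (hEM : ∀ i j, cov[E i j, M τ; P] = 0) (hEE' : ∀ i j l, cov[E i j, E' l; P] = 0) :
    cov[sampleMean fun i ↦ sampleMean fun j ↦ M i + E i j,
      sampleMean fun l ↦ M τ + E' l; P] = Var[M τ; P] / T := by
  have hterm : ∀ i j l, cov[M i + E i j, M τ + E' l; P] = if i = τ then Var[M τ; P] else 0 := by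
    intro i j l
    rw [covariance_add_add_of_uncorrelated (hM i) (hE i j) (hM τ) (hE' l) (hME' i l) (hEM i j)
      (hEE' i j l)]
    split_ifs with hi
    · rw [hi, covariance_self (hM τ).aemeasurable]
    · exact hMM i hi
  have hT : (T : ℝ) ≠ 0 := Nat.cast_ne_zero.mpr τ.pos.ne'
  simp_rw [covariance_sampleMean_left (fun i ↦ memLp_sampleMean fun j ↦ (hM i).add (hE i j))
    (memLp_sampleMean fun l ↦ (hM τ).add (hE' l)),
    covariance_sampleMean_left (fun j ↦ (hM _).add (hE _ j))
    (memLp_sampleMean fun l ↦ (hM τ).add (hE' l)),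
    covariance_sampleMean_right ((hM _).add (hE _ _)) fun l ↦ (hM τ).add (hE' l), hterm]
  simp [hN, hk]
  field_simp

include hM hE hE' in
lemma integrable_taskMean_sub_mul_batchMean_sub (m : ℝ) :
    Integrable (fun ω ↦ ((sampleMean fun i ↦ sampleMean fun j ↦ M i + E i j) ω - m)
      * ((sampleMean fun l ↦ M τ + E' l) ω - m)) P :=
  ((memLp_sampleMean fun i ↦ memLp_sampleMean fun j ↦ (hM i).add (hE i j)).sub
    (memLp_const m)).integrable_mul
      ((memLp_sampleMean fun l ↦ (hM τ).add (hE' l)).sub (memLp_const m))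

include hM hE hE' in
lemma integral_taskMean_sub_mul_batchMean_sub {m : ℝ} (hN : N ≠ 0) (hk : k ≠ 0)
    (hMmean : ∀ i, P[M i] = m) (hEmean : ∀ i j, P[E i j] = 0) (hE'mean : ∀ l, P[E' l] = 0)
    (hMM : ∀ i ≠ τ, cov[M i, M τ; P] = 0) (hME' : ∀ i l, cov[M i, E' l; P] = 0)
    (hEM : ∀ i j, cov[E i j, M τ; P] = 0) (hEE' : ∀ i j l, cov[E i j, E' l; P] = 0) :
    ∫ ω, ((sampleMean fun i ↦ sampleMean fun j ↦ M i + E i j) ω - m)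
      * ((sampleMean fun l ↦ M τ + E' l) ω - m) ∂P = Var[M τ; P] / T := by
  have hadd_mean {X Y : Ω → ℝ} (hX : MemLp X 2 P) (hY : MemLp Y 2 P) (hXm : P[X] = m)
      (hYm : P[Y] = 0) : P[X + Y] = m := by
    rw [integral_add' (hX.integrable one_le_two) (hY.integrable one_le_two), hXm, hYm, add_zero]
  have htask_mean : P[sampleMean fun i ↦ sampleMean fun j ↦ M i + E i j] = m :=
    integral_sampleMean τ.pos.ne'
      (fun i ↦ (memLp_sampleMean fun j ↦ (hM i).add (hE i j)).integrable one_le_two)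
      fun i ↦ integral_sampleMean hN (fun j ↦ ((hM i).add (hE i j)).integrable one_le_two)
        fun j ↦ hadd_mean (hM i) (hE i j) (hMmean i) (hEmean i j)
  have hbatch_mean : P[sampleMean fun l ↦ M τ + E' l] = m :=
    integral_sampleMean hk (fun l ↦ ((hM τ).add (hE' l)).integrable one_le_two)
      fun l ↦ hadd_mean (hM τ) (hE' l) (hMmean τ) (hE'mean l)
  rw [integral_sub_mul_sub_eq_covariance htask_mean hbatch_mean]
  exact covariance_taskMean_batchMean τ hM hE hE' hN hk hMM hME' hEM hEE'

end TwoLevelMean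

end WeakAdversary

open WeakAdversary

theorem weak_adversary_in_expectation_general
    {Ω : Type*} [MeasureSpace Ω] [IsProbabilityMeasure (ℙ : Measure Ω)]
    (T N k d : ℕ) (hN : 0 < N) (hk : 0 < k)
    (μbar σbar σ : ℝ)
    (μ : Fin d → Fin T → Ω → ℝ) (ε : Fin d → Fin T → Fin N → Ω → ℝ)
    (ε' : Fin d → Fin k → Ω → ℝ)
    (hμlaw : ∀ c i, Measure.map (μ c i) ℙ = gaussianReal μbar (σbar ^ 2).toNNReal)
    (hεlaw : ∀ c i j, Measure.map (ε c i j) ℙ = gaussianReal 0 (σ ^ 2).toNNReal)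
    (hε'law : ∀ c j, Measure.map (ε' c j) ℙ = gaussianReal 0 (σ ^ 2).toNNReal)
    (hindep : iIndepFun
      (Sum.elim (fun p : Fin d × Fin T => μ p.1 p.2)
        (Sum.elim (fun p : Fin d × Fin T × Fin N => ε p.1 p.2.1 p.2.2)
          (fun p : Fin d × Fin k => ε' p.1 p.2))) ℙ)
    (τ : Fin T) :
    ∫ ω, ∑ c : Fin d,
      ((1 / (T : ℝ)) * ∑ i : Fin T, (1 / (N : ℝ)) * ∑ j : Fin N, (μ c i ω + ε c i j ω) - μbar)
        * ((1 / (k : ℝ)) * ∑ j : Fin k, (μ c τ ω + ε' c j ω) - μbar) ∂ℙ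
      = (d / T : ℝ) * σbar ^ 2 := by
  have hμ c i : MemLp (μ c i) 2 ℙ := memLp_two_of_map_eq_gaussianReal (hμlaw c i)
  have hε c i j : MemLp (ε c i j) 2 ℙ := memLp_two_of_map_eq_gaussianReal (hεlaw c i j)
  have hε' c l : MemLp (ε' c l) 2 ℙ := memLp_two_of_map_eq_gaussianReal (hε'law c l)
  set F := Sum.elim (fun p : Fin d × Fin T => μ p.1 p.2)
    (Sum.elim (fun p : Fin d × Fin T × Fin N => ε p.1 p.2.1 p.2.2)
      (fun p : Fin d × Fin k => ε' p.1 p.2))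
  have hF : ∀ a, MemLp (F a) 2 ℙ
    | .inl (c, i) => hμ c i
    | .inr (.inl (c, i, j)) => hε c i j
    | .inr (.inr (c, l)) => hε' c l
  have hcov {a b} (hab : a ≠ b) : cov[F a, F b; ℙ] = 0 :=
    (hindep.indepFun hab).covariance_eq_zero (hF a) (hF b)
  change ∫ ω, ∑ c, ((sampleMean fun i ↦ sampleMean fun j ↦ μ c i + ε c i j) ω - μbar)
      * ((sampleMean fun l ↦ μ c τ + ε' c l) ω - μbar) = _
  rw [integral_finsetSum _ fun c _ ↦
    integrable_taskMean_sub_mul_batchMean_sub τ (hμ c) (hε c) (hε' c) μbar]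
  calc ∑ c, _ = ∑ _c : Fin d, σbar ^ 2 / T := Finset.sum_congr rfl fun c _ ↦ by
        rw [integral_taskMean_sub_mul_batchMean_sub τ (hμ c) (hε c) (hε' c) hN.ne' hk.ne'
          (fun i ↦ integral_of_map_eq_gaussianReal (hμlaw c i))
          (fun i j ↦ integral_of_map_eq_gaussianReal (hεlaw c i j))
          (fun l ↦ integral_of_map_eq_gaussianReal (hε'law c l))
          (fun i hi ↦ hcov (a := .inl (c, i)) (b := .inl (c, τ)) (by simpa using hi))
          (fun i l ↦ hcov (a := .inl (c, i)) (b := .inr (.inr (c, l))) (by simp))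
          (fun i j ↦ hcov (a := .inr (.inl (c, i, j))) (b := .inl (c, τ)) (by simp))
          (fun i j l ↦ hcov (a := .inr (.inl (c, i, j))) (b := .inr (.inr (c, l))) (by simp)),
          variance_of_map_eq_gaussianReal (hμlaw c τ), Real.coe_toNNReal _ (sq_nonneg _)]
    _ = (d / T : ℝ) * σbar ^ 2 := by
        rw [Finset.sum_const, Finset.card_univ, Fintype.card_fin, nsmul_eq_mul]
        ring

/-- Weak adversary IN case (Theorem 2): the tracing statistic
`z_IN := Σ_c (μ̂_c − μ̄)·(μ_{B,c} − μ̄)`, computed from a challenge batch of `k` fresh samples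
drawn from the distribution of a fixed training task `τ` (samples never used to compute `μ̂`),
satisfies `E[z_IN] = (d/T)·σ̄²`. -/
theorem weak_adversary_in_expectation
    {Ω : Type*} [MeasureSpace Ω] [IsProbabilityMeasure (ℙ : Measure Ω)]
    (T N k d : ℕ) (hT : 0 < T) (hN : 0 < N) (hk : 0 < k) (hd : 0 < d) (hkN : k ≤ N)
    (μbar σbar σ : ℝ) (hσbar : 0 < σbar) (hσ : 0 < σ)
    (μ : Fin d → Fin T → Ω → ℝ) (ε : Fin d → Fin T → Fin N → Ω → ℝ)
    (ε' : Fin d → Fin k → Ω → ℝ)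
    (hμmeas : ∀ c i, Measurable (μ c i))
    (hεmeas : ∀ c i j, Measurable (ε c i j))
    (hε'meas : ∀ c j, Measurable (ε' c j))
    (hμlaw : ∀ c i, Measure.map (μ c i) ℙ = gaussianReal μbar (σbar ^ 2).toNNReal)
    (hεlaw : ∀ c i j, Measure.map (ε c i j) ℙ = gaussianReal 0 (σ ^ 2).toNNReal)
    (hε'law : ∀ c j, Measure.map (ε' c j) ℙ = gaussianReal 0 (σ ^ 2).toNNReal)
    (hindep : iIndepFun
      (Sum.elim (fun p : Fin d × Fin T => μ p.1 p.2)
        (Sum.elim (fun p : Fin d × Fin T × Fin N => ε p.1 p.2.1 p.2.2)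
          (fun p : Fin d × Fin k => ε' p.1 p.2))) ℙ)
    (τ : Fin T) :
    ∫ ω, ∑ c : Fin d,
      ((1 / (T : ℝ)) * ∑ i : Fin T, (1 / (N : ℝ)) * ∑ j : Fin N, (μ c i ω + ε c i j ω) - μbar)
        * ((1 / (k : ℝ)) * ∑ j : Fin k, (μ c τ ω + ε' c j ω) - μbar) ∂ℙ
      = (d / T : ℝ) * σbar ^ 2 :=
  weak_adversary_in_expectation_general T N k d hN hk μbar σbar σ μ ε ε' hμlaw hεlaw hε'law hindep τ
end
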